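/- arXiv:2505.01292 — 11 statements merged into one kernel-verified Lean document; each statement's English description precedes it below -/
import Mathlib

section
/- Let d ≥ 1 be a natural number, let m, n > 0 and p > q be real numbers, let f, f̃, m* : Fin d → ℝ, let (Ω, P) be a probability space, and let Y : Fin d → Ω → ℝ be random variables, each in L²(P), with E[Y k] = n · (f k · (p − q) + q) for every k. Define f̂ k := (Y k + m* k − q · (m + n))/((m + n) · (p − q)) and g k := (Y k − q · n)/(n · (p − q)). Then E[(1/d) · ∑_k (f̂ k − f̃ k)²] = (1/d) · ∑_k ((n · f k · (p − q) + m* k − m · q)/((m + n) · (p − q)) − f̃ k)² + (n/(m + n))² · (1/d) · ∑_k Var(g k). -/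
open MeasureTheory ProbabilityTheory

lemma integral_affine {Ω : Type*} [MeasurableSpace Ω] (μ : Measure Ω)
    [IsProbabilityMeasure μ] {X : Ω → ℝ} (hX : MemLp X 2 μ) (a b : ℝ) :
    ∫ ω, (a * X ω + b) ∂μ = a * (∫ ω, X ω ∂μ) + b := by
  have hXi : Integrable X μ := hX.integrable one_le_two
  rw [integral_add (hXi.const_mul a) (integrable_const b), integral_const_mul,
    integral_const]
  simp

lemma integral_affine_sq {Ω : Type*} [MeasurableSpace Ω] (μ : Measure Ω)
    [IsProbabilityMeasure μ] {X : Ω → ℝ} (hX : MemLp X 2 μ) (a b : ℝ) :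
    ∫ ω, (a * X ω + b) ^ 2 ∂μ
      = a ^ 2 * variance X μ + (a * (∫ ω, X ω ∂μ) + b) ^ 2 := by
  have hXi : Integrable X μ := hX.integrable one_le_two
  have hX2 : Integrable (fun ω => X ω ^ 2) μ := hX.integrable_sq
  have h : ∀ ω, (a * X ω + b) ^ 2
      = a ^ 2 * X ω ^ 2 + (2 * a * b) * X ω + b ^ 2 := fun ω => by ring
  have hI2 : Integrable (fun ω => a ^ 2 * X ω ^ 2) μ := hX2.const_mul _
  have hI3 : Integrable (fun ω => 2 * a * b * X ω) μ := hXi.const_mul _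
  have hI1 : Integrable (fun ω => a ^ 2 * X ω ^ 2 + 2 * a * b * X ω) μ := hI2.add hI3
  simp_rw [h]
  rw [integral_add hI1 (integrable_const _),
    integral_add hI2 hI3, integral_const_mul,
    integral_const_mul, integral_const, variance_eq_sub hX]
  have : (∫ ω, (X ^ 2) ω ∂μ) = ∫ ω, X ω ^ 2 ∂μ := rfl
  simp only [this]
  simp
  ring

lemma variance_affine {Ω : Type*} [MeasurableSpace Ω] (μ : Measure Ω)
    [IsProbabilityMeasure μ] {X : Ω → ℝ} (hX : MemLp X 2 μ) (a b : ℝ) :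
    variance (fun ω => a * X ω + b) μ = a ^ 2 * variance X μ := by
  have hY : MemLp (fun ω => a * X ω + b) 2 μ := (hX.const_mul a).add (memLp_const b)
  have h2 : (∫ ω, ((fun ω => a * X ω + b) ^ 2) ω ∂μ) = ∫ ω, (a * X ω + b) ^ 2 ∂μ := rfl
  rw [variance_eq_sub hY, h2, integral_affine_sq μ hX a b, integral_affine μ hX a b,
    variance_eq_sub hX]
  have h3 : (∫ ω, (X ^ 2) ω ∂μ) = ∫ ω, X ω ^ 2 ∂μ := rfl
  rw [h3]
  ring

/-- Theorem 4.2: expected manipulation gap of the Output Publication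
Manipulation Attack (OPMA). -/
theorem opma_expected_manipulation_gap
    {d : ℕ} (hd : 1 ≤ d) {m n p q : ℝ} (hm : 0 < m) (hn : 0 < n) (hpq : q < p)
    (f ftil mstar : Fin d → ℝ)
    {Ω : Type*} [MeasurableSpace Ω] (μ : Measure Ω) [IsProbabilityMeasure μ]
    (Y : Fin d → Ω → ℝ)
    (hL2 : ∀ k, MemLp (Y k) 2 μ)
    (hmean : ∀ k, ∫ ω, Y k ω ∂μ = n * (f k * (p - q) + q)) :
    ∫ ω, (1 / (d : ℝ)) *
        ∑ k, ((Y k ω + mstar k - q * (m + n)) / ((m + n) * (p - q)) - ftil k) ^ 2 ∂μ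
      = (1 / (d : ℝ)) *
          ∑ k, ((n * f k * (p - q) + mstar k - m * q) / ((m + n) * (p - q)) - ftil k) ^ 2
        + (n / (m + n)) ^ 2 * ((1 / (d : ℝ)) *
            ∑ k, variance (fun ω => (Y k ω - q * n) / (n * (p - q))) μ) := by
  have hpq' : (0:ℝ) < p - q := sub_pos.2 hpq
  have hD : (m + n) * (p - q) ≠ 0 := by positivity
  have hmn : (m + n) ≠ 0 := by positivity
  have hnp : n * (p - q) ≠ 0 := by positivity
  -- rewrite the integrand in affine form
  have h1 : ∀ (k : Fin d) (ω : Ω),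
      ((Y k ω + mstar k - q * (m + n)) / ((m + n) * (p - q)) - ftil k) ^ 2
        = (1 / ((m + n) * (p - q)) * Y k ω
            + ((mstar k - q * (m + n)) / ((m + n) * (p - q)) - ftil k)) ^ 2 := by
    intro k ω; ring
  have hInt : ∀ k : Fin d, Integrable (fun ω =>
      (1 / ((m + n) * (p - q)) * Y k ω
        + ((mstar k - q * (m + n)) / ((m + n) * (p - q)) - ftil k)) ^ 2) μ := by
    intro k
    have hML : MemLp (fun ω => 1 / ((m + n) * (p - q)) * Y k ω
        + ((mstar k - q * (m + n)) / ((m + n) * (p - q)) - ftil k)) 2 μ :=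
      ((hL2 k).const_mul _).add (memLp_const _)
    exact hML.integrable_sq
  have hVar : ∀ k : Fin d,
      variance (fun ω => (Y k ω - q * n) / (n * (p - q))) μ
        = (1 / (n * (p - q))) ^ 2 * variance (Y k) μ := by
    intro k
    have : (fun ω => (Y k ω - q * n) / (n * (p - q)))
        = fun ω => 1 / (n * (p - q)) * Y k ω + (-(q * n) / (n * (p - q))) := by
      funext ω; ring
    rw [this, variance_affine μ (hL2 k)]
  have hIk : ∀ k : Fin d, ∫ ω,
      (1 / ((m + n) * (p - q)) * Y k ω
        + ((mstar k - q * (m + n)) / ((m + n) * (p - q)) - ftil k)) ^ 2 ∂μ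
      = ((n * f k * (p - q) + mstar k - m * q) / ((m + n) * (p - q)) - ftil k) ^ 2
        + (n / (m + n)) ^ 2 * variance (fun ω => (Y k ω - q * n) / (n * (p - q))) μ := by
    intro k
    rw [integral_affine_sq μ (hL2 k), hmean k, hVar k]
    have hv : variance (Y k) μ = variance (Y k) μ := rfl
    field_simp
    ring
  simp_rw [h1]
  rw [integral_const_mul, integral_finset_sum _ (fun k _ => hInt k)]
  simp_rw [hIk]
  rw [Finset.sum_add_distrib, mul_add, ← Finset.mul_sum]
  ring
end

section
/- For every real n > 0 and every natural number d ≥ 2, the function ε ↦ VarKRR(n, ε, d) = (d − 2 + e^ε)/(n · (e^ε − 1)²) + (d − 2)/(n · d · (e^ε − 1)) is strictly antitone on (0, ∞): if 0 < ε₁ < ε₂ then VarKRR(n, ε₂, d) < VarKRR(n, ε₁, d). -/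
/-- Average per-item variance of the kRR frequency oracle with `n` users,
privacy budget `ε` and domain size `d`. -/
noncomputable def VarKRR (n ε : ℝ) (d : ℕ) : ℝ :=
  ((d : ℝ) - 2 + Real.exp ε) / (n * (Real.exp ε - 1) ^ 2)
    + ((d : ℝ) - 2) / (n * (d : ℝ) * (Real.exp ε - 1))

/-- The kRR variance is strictly decreasing in the privacy budget. -/
theorem varKRR_strictAnti {n : ℝ} (hn : 0 < n) {d : ℕ} (hd : 2 ≤ d)
    {ε₁ ε₂ : ℝ} (h1 : 0 < ε₁) (h12 : ε₁ < ε₂) :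
    VarKRR n ε₂ d < VarKRR n ε₁ d := by
  unfold VarKRR
  have hc : (0:ℝ) ≤ (d:ℝ) - 2 := by
    have : (2:ℝ) ≤ (d:ℝ) := by exact_mod_cast hd
    linarith
  have hdpos : (0:ℝ) < (d:ℝ) := by linarith
  have he1 : 1 < Real.exp ε₁ := by simpa using Real.exp_lt_exp.mpr h1
  have he12 : Real.exp ε₁ < Real.exp ε₂ := Real.exp_lt_exp.mpr h12
  set u := Real.exp ε₁ with hu
  set v := Real.exp ε₂ with hv
  have hu1 : (0:ℝ) < u - 1 := by linarith
  have hv1 : (0:ℝ) < v - 1 := by linarith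
  have hA : ((d:ℝ) - 2 + v) / (n * (v - 1) ^ 2) < ((d:ℝ) - 2 + u) / (n * (u - 1) ^ 2) := by
    rw [div_lt_div_iff₀ (by positivity) (by positivity)]
    have key : ((d:ℝ) - 2 + v) * (u - 1) ^ 2 < ((d:ℝ) - 2 + u) * (v - 1) ^ 2 := by
      nlinarith [mul_pos hu1 hv1, mul_pos (mul_pos hu1 hv1) (sub_pos.mpr he12),
        mul_nonneg hc (mul_pos (sub_pos.mpr he12) (by linarith : (0:ℝ) < u + v - 2)).le]
    nlinarith [mul_pos hn (sub_pos.mpr key)]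
  have hB : ((d:ℝ) - 2) / (n * (d:ℝ) * (v - 1)) ≤ ((d:ℝ) - 2) / (n * (d:ℝ) * (u - 1)) := by
    rw [div_le_div_iff₀ (by positivity) (by positivity)]
    nlinarith [mul_nonneg hc (mul_pos (mul_pos hn hdpos) (sub_pos.mpr he12)).le]
  linarith
end

section
/- Let d ≥ 2 be a natural number, let m, n > 0 be real numbers, and let f, f̃ : Fin d → ℝ. If 0 < ε₁ < ε₂ then G_I(m, n, ε₂) < G_I(m, n, ε₁); that is, the expected IPMA manipulation gap is strictly decreasing in the privacy budget ε, so a larger ε implies a more successful attack. -/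
/-- The feasible set of fake-user input allocations with `m` fake users. -/
def Feas {d : ℕ} (m : ℝ) : Set (Fin d → ℝ) :=
  {x | (∀ k, 0 ≤ x k ∧ x k ≤ m) ∧ ∑ k, x k = m}

/-- The IPMA bias objective. -/
noncomputable def BI {d : ℕ} (f ftil : Fin d → ℝ) (m n : ℝ) (x : Fin d → ℝ) : ℝ :=
  (1 / (d : ℝ)) * ∑ k, ((x k + n * f k) / (n + m) - ftil k) ^ 2

/-- The expected IPMA manipulation gap. -/
noncomputable def GI {d : ℕ} (f ftil : Fin d → ℝ) (m n ε : ℝ) : ℝ :=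
  sInf (BI f ftil m n '' Feas m) + VarKRR (n + m) ε d


lemma varKRR_lt {d : ℕ} (hd : 2 ≤ d) {N ε₁ ε₂ : ℝ} (hN : 0 < N)
    (h1 : 0 < ε₁) (h12 : ε₁ < ε₂) : VarKRR N ε₂ d < VarKRR N ε₁ d := by
  have hD : (2:ℝ) ≤ d := by exact_mod_cast hd
  have he1 : 1 < Real.exp ε₁ := by
    calc (1:ℝ) = Real.exp 0 := (Real.exp_zero).symm
    _ < _ := Real.exp_lt_exp.2 h1
  have he2 : Real.exp ε₁ < Real.exp ε₂ := Real.exp_lt_exp.2 h12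
  set a := Real.exp ε₁
  set b := Real.exp ε₂
  unfold VarKRR
  have ha : 0 < a - 1 := by linarith
  have hb : 0 < b - 1 := by linarith
  have hdpos : (0:ℝ) < d := by linarith
  have h1' : ((d:ℝ) - 2 + b) / (N * (b-1)^2) < ((d:ℝ) - 2 + a) / (N * (a-1)^2) := by
    rw [div_lt_div_iff₀ (by positivity) (by positivity)]
    have hc : (0:ℝ) ≤ (d:ℝ) - 2 := by linarith
    have hba : 0 < b - a := by linarith
    have k1 : 0 < N * ((a-1) * (b-1) * (b - a)) := by positivity
    have k2 : 0 ≤ N * (((d:ℝ)-2) * ((b-1)^2 - (a-1)^2)) := by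
      apply mul_nonneg hN.le
      apply mul_nonneg hc
      nlinarith
    have k3 : 0 < N * ((b-1)^2 - (a-1)^2) := by
      apply mul_pos hN; nlinarith
    nlinarith [k1, k2, k3]
  have h2' : ((d:ℝ) - 2) / (N * d * (b-1)) ≤ ((d:ℝ) - 2) / (N * d * (a-1)) := by
    gcongr <;> first | positivity | linarith
  linarith

/-- Corollary 4.1: the expected IPMA manipulation gap is strictly decreasing
in the privacy budget `ε`. -/
theorem GI_strictAnti_in_budget {d : ℕ} (hd : 2 ≤ d) {m n : ℝ}
    (hm : 0 < m) (hn : 0 < n) (f ftil : Fin d → ℝ)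
    {ε₁ ε₂ : ℝ} (h1 : 0 < ε₁) (h12 : ε₁ < ε₂) :
    GI f ftil m n ε₂ < GI f ftil m n ε₁ := by
  unfold GI
  exact (add_lt_add_iff_left _).2 (varKRR_lt hd (by linarith) h1 h12)
end

section
/- Let d ≥ 1 be a natural number, let m, n > 0 and α > 0 be real numbers, and let f, f̃ : Fin d → ℝ. Then sInf {(1/d) · ∑_k ((x k + n · f k)/(n + m) − f̃ k)² : x ∈ F(m)} = sInf {(1/d) · ∑_k ((x k + α · n · f k)/(α · (n + m)) − f̃ k)² : x ∈ F(α · m)}; that is, the optimal IPMA bias value is invariant under scaling both the number of fake users and the number of genuine users by α. -/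
/-- Scaling lemma for the optimal IPMA bias value: it is invariant under
scaling both the number of fake users and the number of genuine users by `α`. -/
theorem ipma_bias_sInf_scaling {d : ℕ} (hd : 1 ≤ d) {m n α : ℝ}
    (hm : 0 < m) (hn : 0 < n) (hα : 0 < α) (f ftil : Fin d → ℝ) :
    sInf ((fun x : Fin d → ℝ =>
        (1 / (d : ℝ)) * ∑ k, ((x k + n * f k) / (n + m) - ftil k) ^ 2) '' Feas m)
      = sInf ((fun x : Fin d → ℝ =>
        (1 / (d : ℝ)) * ∑ k, ((x k + α * n * f k) / (α * (n + m)) - ftil k) ^ 2) ''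
          Feas (α * m)) := by
  have hα0 : α ≠ 0 := ne_of_gt hα
  congr 1
  ext y
  constructor
  · rintro ⟨x, ⟨hb, hs⟩, rfl⟩
    refine ⟨fun k => α * x k, ⟨fun k => ⟨mul_nonneg hα.le (hb k).1,
      mul_le_mul_of_nonneg_left (hb k).2 hα.le⟩, by rw [← Finset.mul_sum, hs]⟩, ?_⟩
    simp only
    congr 1
    apply Finset.sum_congr rfl
    intro k _
    congr 1
    field_simp
  · rintro ⟨x, ⟨hb, hs⟩, rfl⟩
    refine ⟨fun k => x k / α, ⟨fun k => ⟨div_nonneg (hb k).1 hα.le,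
      (div_le_iff₀ hα).mpr (by linarith [(hb k).2])⟩, ?_⟩, ?_⟩
    · rw [← Finset.sum_div, hs, mul_comm, mul_div_assoc, div_self hα0, mul_one]
    · simp only
      congr 1
      apply Finset.sum_congr rfl
      intro k _
      congr 1
      field_simp
end

section
/- Let d ≥ 2 be a natural number, let m, n > 0 and ε > 0 be real numbers, and let f, f̃ : Fin d → ℝ. For every real α > 1, G_I(m, n, ε) > G_I(α·m, α·n, ε), where G_I(α·m, α·n, ε) is defined with feasible set F(α·m) and bias objective (1/d) · ∑_k ((x k + α·n·f k)/(α·(n + m)) − f̃ k)² and variance term VarKRR(α·(n + m), ε, d); that is, scaling both the fake and genuine user populations by α > 1 strictly decreases the expected IPMA manipulation gap. -/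
/-- Corollary 4.2: scaling both the fake and genuine user populations by
`α > 1` strictly decreases the expected IPMA manipulation gap. -/
theorem GI_strictAnti_in_population {d : ℕ} (hd : 2 ≤ d) {m n ε : ℝ}
    (hm : 0 < m) (hn : 0 < n) (hε : 0 < ε) (f ftil : Fin d → ℝ)
    {α : ℝ} (hα : 1 < α) :
    GI f ftil (α * m) (α * n) ε < GI f ftil m n ε := by
  have hα0 : (0 : ℝ) < α := zero_lt_one.trans hα
  have hα0' : α ≠ 0 := ne_of_gt hα0
  have hBI : ∀ x : Fin d → ℝ, BI f ftil (α * m) (α * n) (α • x) = BI f ftil m n x := by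
    intro x
    unfold BI
    congr 1
    apply Finset.sum_congr rfl
    intro k _
    have h1 : α • x k + α * n * f k = α * (x k + n * f k) := by
      simp [Pi.smul_apply, smul_eq_mul]; ring
    have h2 : α * n + α * m = α * (n + m) := by ring
    rw [Pi.smul_apply, smul_eq_mul,
      show α * x k + α * n * f k = α * (x k + n * f k) by ring, h2,
      mul_div_mul_left _ _ hα0']
  have himg : BI f ftil (α * m) (α * n) '' Feas (α * m) = BI f ftil m n '' Feas m := by
    ext y
    constructor
    · rintro ⟨x, ⟨hx1, hx2⟩, rfl⟩
      refine ⟨α⁻¹ • x, ⟨fun k => ?_, ?_⟩, ?_⟩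
      · constructor
        · have := (hx1 k).1
          simp only [Pi.smul_apply, smul_eq_mul]
          positivity
        · have := (hx1 k).2
          simp only [Pi.smul_apply, smul_eq_mul]
          rw [inv_mul_le_iff₀ hα0]
          linarith
      · simp only [Pi.smul_apply, smul_eq_mul, ← Finset.mul_sum, hx2]
        field_simp
      · rw [← hBI (α⁻¹ • x), smul_inv_smul₀ hα0']
    · rintro ⟨x, ⟨hx1, hx2⟩, rfl⟩
      refine ⟨α • x, ⟨fun k => ?_, ?_⟩, hBI x⟩
      · constructor
        · have := (hx1 k).1
          simp only [Pi.smul_apply, smul_eq_mul]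
          positivity
        · have := (hx1 k).2
          simp only [Pi.smul_apply, smul_eq_mul]
          nlinarith
      · simp only [Pi.smul_apply, smul_eq_mul, ← Finset.mul_sum, hx2]
  unfold GI
  rw [himg]
  have hE : 1 < Real.exp ε := by nlinarith [Real.add_one_le_exp ε]
  have hd2 : (2 : ℝ) ≤ (d : ℝ) := by exact_mod_cast hd
  have hs : n + m < α * n + α * m := by nlinarith
  have hsp : 0 < n + m := by linarith
  have hsp' : 0 < α * n + α * m := by nlinarith
  have hvar : VarKRR (α * n + α * m) ε d < VarKRR (n + m) ε d := by
    unfold VarKRR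
    have hE1 : 0 < Real.exp ε - 1 := by linarith
    have hq : 0 < (Real.exp ε - 1) ^ 2 := pow_pos hE1 2
    have hd0 : (0:ℝ) < d := by linarith
    apply add_lt_add_of_lt_of_le
    · apply div_lt_div_of_pos_left
      · linarith
      · exact mul_pos hsp hq
      · nlinarith
    · apply div_le_div_of_nonneg_left
      · linarith
      · exact mul_pos (mul_pos hsp hd0) hE1
      · nlinarith [mul_lt_mul_of_pos_right hs (mul_pos hd0 hE1)]
  linarith
end

section
/- Let d ≥ 2 be a natural number, let m, n > 0 be real numbers, and let f, f̃ : Fin d → ℝ satisfy f k ≥ 0, 0 < f̃ k < 1 for every k, ∑_k f k = 1 and ∑_k f̃ k = 1. Assume that for every k, m ≥ n · f k / f̃ k − n and m ≥ (n · f̃ k − n · f k)/(1 − f̃ k). Then the vector x* defined by x* k := (m + n) · f̃ k − n · f k satisfies 0 ≤ x* k ≤ m for every k and ∑_k x* k = m (so x* ∈ F(m)), and B_I(x*) = 0; consequently sInf {B_I(x) : x ∈ F(m)} = 0, and for every ε > 0 the expected IPMA manipulation gap equals G_I(m, n, ε) = VarKRR(n + m, ε, d). -/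
/-- Corollary 4.3: with sufficiently many fake users, the IPMA bias can be made
zero, so the expected IPMA manipulation gap equals the oracle's variance. -/
theorem ipma_sufficient_fake_users {d : ℕ} (hd : 2 ≤ d) {m n : ℝ}
    (hm : 0 < m) (hn : 0 < n) (f ftil : Fin d → ℝ)
    (hf : ∀ k, 0 ≤ f k) (hftil : ∀ k, 0 < ftil k ∧ ftil k < 1)
    (hsumf : ∑ k, f k = 1) (hsumftil : ∑ k, ftil k = 1)
    (hm1 : ∀ k, n * f k / ftil k - n ≤ m)
    (hm2 : ∀ k, (n * ftil k - n * f k) / (1 - ftil k) ≤ m) :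
    (fun k => (m + n) * ftil k - n * f k) ∈ Feas (d := d) m ∧
    BI f ftil m n (fun k => (m + n) * ftil k - n * f k) = 0 ∧
    sInf (BI f ftil m n '' Feas m) = 0 ∧
    ∀ ε : ℝ, 0 < ε → GI f ftil m n ε = VarKRR (n + m) ε d := by
  have hnm : (0:ℝ) < n + m := by linarith
  have hmem : (fun k => (m + n) * ftil k - n * f k) ∈ Feas (d := d) m := by
    constructor
    · intro k
      obtain ⟨h0, h1⟩ := hftil k
      constructor
      · have := hm1 k
        have h' : n * f k / ftil k ≤ m + n := by linarith
        have := (div_le_iff₀ h0).mp h'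
        show 0 ≤ (m + n) * ftil k - n * f k
        linarith
      · have := hm2 k
        have h1' : (0:ℝ) < 1 - ftil k := by linarith
        have := (div_le_iff₀ h1').mp this
        show (m + n) * ftil k - n * f k ≤ m
        nlinarith
    · simp only [Finset.sum_sub_distrib, ← Finset.mul_sum, hsumf, hsumftil]
      ring
  have hBI : BI f ftil m n (fun k => (m + n) * ftil k - n * f k) = 0 := by
    unfold BI
    have : ∀ k : Fin d, (((m + n) * ftil k - n * f k + n * f k) / (n + m) - ftil k) ^ 2 = 0 := by
      intro k
      have : ((m + n) * ftil k - n * f k + n * f k) / (n + m) - ftil k = 0 := by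
        field_simp
        ring
      rw [this]; ring
    simp only [this, Finset.sum_const, smul_zero, mul_zero]
  have hInf : sInf (BI f ftil m n '' Feas m) = 0 := by
    have hbdd : BddBelow (BI f ftil m n '' Feas m) := by
      refine ⟨0, ?_⟩
      rintro y ⟨x, hx, rfl⟩
      unfold BI; positivity
    apply le_antisymm
    · exact csInf_le hbdd ⟨_, hmem, hBI⟩
    · refine le_csInf ⟨_, Set.mem_image_of_mem _ hmem⟩ ?_
      rintro y ⟨x, hx, rfl⟩
      unfold BI; positivity
  refine ⟨hmem, hBI, hInf, ?_⟩
  intro ε hε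
  unfold GI
  rw [hInf, zero_add]
end

section
/- Let d ≥ 1 be a natural number, let m, n > 0, p > q and α > 0 be real numbers, and let f, f̃ : Fin d → ℝ. Then sInf {(1/d) · ∑_k ((n · f k · (p − q) + x k − m · q)/((m + n) · (p − q)) − f̃ k)² : x ∈ F(m)} = sInf {(1/d) · ∑_k ((α·n · f k · (p − q) + x k − α·m · q)/(α·(m + n) · (p − q)) − f̃ k)² : x ∈ F(α · m)}; that is, the optimal OPMA bias value is invariant under scaling both the number of fake users and the number of genuine users by α. -/
/-- Scaling lemma for the optimal OPMA bias value: it is invariant under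
scaling both the number of fake users and the number of genuine users by `α`. -/
theorem opma_bias_sInf_scaling {d : ℕ} (hd : 1 ≤ d) {m n p q α : ℝ}
    (hm : 0 < m) (hn : 0 < n) (hpq : q < p) (hα : 0 < α) (f ftil : Fin d → ℝ) :
    sInf ((fun x : Fin d → ℝ =>
        (1 / (d : ℝ)) *
          ∑ k, ((n * f k * (p - q) + x k - m * q) / ((m + n) * (p - q)) - ftil k) ^ 2) ''
        Feas m)
      = sInf ((fun x : Fin d → ℝ =>
        (1 / (d : ℝ)) *
          ∑ k, ((α * n * f k * (p - q) + x k - α * m * q) /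
            (α * (m + n) * (p - q)) - ftil k) ^ 2) '' Feas (α * m)) := by
  have hα' : α ≠ 0 := hα.ne'
  have key : ∀ x : Fin d → ℝ,
      (1 / (d : ℝ)) *
        ∑ k, ((α * n * f k * (p - q) + α * x k - α * m * q) /
          (α * (m + n) * (p - q)) - ftil k) ^ 2
      = (1 / (d : ℝ)) *
        ∑ k, ((n * f k * (p - q) + x k - m * q) / ((m + n) * (p - q)) - ftil k) ^ 2 := by
    intro x
    congr 1
    refine Finset.sum_congr rfl fun k _ => ?_
    have : (α * n * f k * (p - q) + α * x k - α * m * q) / (α * (m + n) * (p - q))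
        = (n * f k * (p - q) + x k - m * q) / ((m + n) * (p - q)) := by
      rw [show α * n * f k * (p - q) + α * x k - α * m * q
          = α * (n * f k * (p - q) + x k - m * q) by ring,
        show α * (m + n) * (p - q) = α * ((m + n) * (p - q)) by ring,
        mul_div_mul_left _ _ hα']
    rw [this]
  congr 1
  ext v
  simp only [Set.mem_image, Feas, Set.mem_setOf_eq]
  constructor
  · rintro ⟨x, ⟨hx1, hx2⟩, rfl⟩
    refine ⟨α • x, ⟨fun k => ⟨mul_nonneg hα.le (hx1 k).1, ?_⟩, ?_⟩, ?_⟩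
    · exact mul_le_mul_of_nonneg_left (hx1 k).2 hα.le
    · simp only [Pi.smul_apply, smul_eq_mul, ← Finset.mul_sum, hx2]
    · simpa using (key x)
  · rintro ⟨y, ⟨hy1, hy2⟩, rfl⟩
    refine ⟨α⁻¹ • y, ⟨fun k => ⟨mul_nonneg (by positivity) (hy1 k).1, ?_⟩, ?_⟩, ?_⟩
    · have := (hy1 k).2
      simp only [Pi.smul_apply, smul_eq_mul]
      calc α⁻¹ * y k ≤ α⁻¹ * (α * m) :=
            mul_le_mul_of_nonneg_left this (by positivity)
        _ = m := by field_simp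
    · simp only [Pi.smul_apply, smul_eq_mul, ← Finset.mul_sum, hy2]
      field_simp
    · rw [← key (α⁻¹ • y)]
      congr 1
      refine Finset.sum_congr rfl fun k _ => ?_
      simp only [Pi.smul_apply, smul_eq_mul]
      rw [mul_inv_cancel_left₀ hα']
end

section
/- Let d ≥ 2 be a natural number, let ε > 0, set p := e^ε/(e^ε + d − 1) and q := 1/(e^ε + d − 1), and let m, n > 0 be real numbers. Let f, f̃ : Fin d → ℝ satisfy f k ≥ 0, 0 ≤ f̃ k ≤ 1 for every k, ∑_k f k = 1 and ∑_k f̃ k = 1, and assume that for every k, m ≥ n·(f̃ k − f k)/((1 − q)/(p − q) − f̃ k) and m ≥ n·(f k − f̃ k)/(q/(p − q) + f̃ k). Then the vector x* defined by x* k := (p − q)·((m + n)·f̃ k − n·f k) + m·q satisfies 0 ≤ x* k ≤ m for every k and ∑_k x* k = m (so x* ∈ F(m)), and B_O(x*) = 0; consequently sInf {B_O(x) : x ∈ F(m)} = 0 and the expected OPMA manipulation gap equals G_O(m, n, ε) = (n/(m + n))² · VarKRR(n, ε, d). -/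
/-- The OPMA bias objective with oracle parameters `p > q`. -/
noncomputable def BO {d : ℕ} (f ftil : Fin d → ℝ) (p q m n : ℝ) (x : Fin d → ℝ) : ℝ :=
  (1 / (d : ℝ)) *
    ∑ k, ((n * f k * (p - q) + x k - m * q) / ((m + n) * (p - q)) - ftil k) ^ 2

/-- Corollary 4.4: sufficient number of fake users for OPMA against the kRR
frequency oracle, whose parameters are `p = e^ε/(e^ε + d − 1)` and
`q = 1/(e^ε + d − 1)`. -/
theorem opma_sufficient_fake_users {d : ℕ} (hd : 2 ≤ d) {ε : ℝ} (hε : 0 < ε)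
    {p q : ℝ}
    (hp : p = Real.exp ε / (Real.exp ε + (d : ℝ) - 1))
    (hq : q = 1 / (Real.exp ε + (d : ℝ) - 1))
    {m n : ℝ} (hm : 0 < m) (hn : 0 < n) (f ftil : Fin d → ℝ)
    (hf : ∀ k, 0 ≤ f k) (hftil : ∀ k, 0 ≤ ftil k ∧ ftil k ≤ 1)
    (hsumf : ∑ k, f k = 1) (hsumftil : ∑ k, ftil k = 1)
    (hm1 : ∀ k, n * (ftil k - f k) / ((1 - q) / (p - q) - ftil k) ≤ m)
    (hm2 : ∀ k, n * (f k - ftil k) / (q / (p - q) + ftil k) ≤ m) :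
    (fun k => (p - q) * ((m + n) * ftil k - n * f k) + m * q) ∈ Feas (d := d) m ∧
    BO f ftil p q m n (fun k => (p - q) * ((m + n) * ftil k - n * f k) + m * q) = 0 ∧
    sInf (BO f ftil p q m n '' Feas m) = 0 ∧
    sInf (BO f ftil p q m n '' Feas m) + (n / (m + n)) ^ 2 * VarKRR n ε d
      = (n / (m + n)) ^ 2 * VarKRR n ε d := by
  have hd2 : (2 : ℝ) ≤ (d : ℝ) := by exact_mod_cast hd
  have h1 : (1 : ℝ) < Real.exp ε := by
    calc (1 : ℝ) = Real.exp 0 := Real.exp_zero.symm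
    _ < Real.exp ε := Real.exp_lt_exp.mpr hε
  have hE : 0 < Real.exp ε + (d : ℝ) - 1 := by linarith
  have hEne : Real.exp ε + (d : ℝ) - 1 ≠ 0 := ne_of_gt hE
  have hpq : 0 < p - q := by
    rw [hp, hq, div_sub_div_same]
    exact div_pos (by linarith) hE
  have hq0 : 0 < q := by rw [hq]; positivity
  have hp1 : p < 1 := by
    rw [hp, div_lt_one hE]; linarith
  have hsum_pq : p + ((d : ℝ) - 1) * q = 1 := by
    rw [hp, hq]; field_simp; ring
  have hmn : 0 < m + n := by linarith
  have hmnpq : (m + n) * (p - q) ≠ 0 := by positivity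
  -- feasibility
  have hfeas : (fun k => (p - q) * ((m + n) * ftil k - n * f k) + m * q) ∈ Feas (d := d) m := by
    constructor
    · intro k
      obtain ⟨ht0, ht1⟩ := hftil k
      have hfk := hf k
      constructor
      · -- lower bound using hm2
        have hD2 : 0 < q / (p - q) + ftil k := by positivity
        have h := hm2 k
        rw [div_le_iff₀ hD2] at h
        have h' := mul_le_mul_of_nonneg_right h (le_of_lt hpq)
        have hexp : (q / (p - q) + ftil k) * (p - q) = q + ftil k * (p - q) := by
          rw [add_mul, div_mul_cancel₀ _ (ne_of_gt hpq)]
        have h'' : n * (f k - ftil k) * (p - q) ≤ m * (q + ftil k * (p - q)) := by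
          rw [← hexp, ← mul_assoc]; exact h'
        show 0 ≤ (p - q) * ((m + n) * ftil k - n * f k) + m * q
        nlinarith [h'']
      · -- upper bound using hm1
        have hD1 : 0 < (1 - q) / (p - q) - ftil k := by
          have h2 : 1 < (1 - q) / (p - q) := (one_lt_div hpq).mpr (by linarith)
          linarith
        have h := hm1 k
        rw [div_le_iff₀ hD1] at h
        have h' := mul_le_mul_of_nonneg_right h (le_of_lt hpq)
        have hexp : ((1 - q) / (p - q) - ftil k) * (p - q) = (1 - q) - ftil k * (p - q) := by
          rw [sub_mul, div_mul_cancel₀ _ (ne_of_gt hpq)]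
        have h'' : n * (ftil k - f k) * (p - q) ≤ m * ((1 - q) - ftil k * (p - q)) := by
          rw [← hexp, ← mul_assoc]; exact h'
        show (p - q) * ((m + n) * ftil k - n * f k) + m * q ≤ m
        nlinarith [h'']
    · have : ∑ k, ((p - q) * ((m + n) * ftil k - n * f k) + m * q)
          = (p - q) * ((m + n) * 1 - n * 1) + (d : ℝ) * (m * q) := by
        rw [Finset.sum_add_distrib, ← Finset.mul_sum]
        simp [Finset.mul_sum, Finset.sum_sub_distrib, ← Finset.mul_sum, hsumf, hsumftil]
      rw [this]; nlinarith [hsum_pq]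
  have hBO0 : BO f ftil p q m n (fun k => (p - q) * ((m + n) * ftil k - n * f k) + m * q) = 0 := by
    unfold BO
    have : ∀ k : Fin d,
        ((n * f k * (p - q) + ((p - q) * ((m + n) * ftil k - n * f k) + m * q) - m * q)
          / ((m + n) * (p - q)) - ftil k) ^ 2 = 0 := by
      intro k
      have hnum : n * f k * (p - q) + ((p - q) * ((m + n) * ftil k - n * f k) + m * q) - m * q
          = ((m + n) * (p - q)) * ftil k := by ring
      rw [hnum, mul_div_cancel_left₀ _ hmnpq, sub_self]
      ring
    simp only [this]
    simp
  have hmem : (0 : ℝ) ∈ BO f ftil p q m n '' Feas m :=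
    ⟨_, hfeas, hBO0⟩
  have hnonneg : ∀ y ∈ BO f ftil p q m n '' Feas m, (0 : ℝ) ≤ y := by
    rintro y ⟨x, -, rfl⟩
    unfold BO
    have hdpos : (0 : ℝ) ≤ 1 / (d : ℝ) := by positivity
    exact mul_nonneg hdpos (Finset.sum_nonneg fun k _ => sq_nonneg _)
  have hinf : sInf (BO f ftil p q m n '' Feas m) = 0 := by
    apply le_antisymm
    · exact csInf_le ⟨0, hnonneg⟩ hmem
    · exact le_csInf ⟨0, hmem⟩ hnonneg
  exact ⟨hfeas, hBO0, hinf, by rw [hinf]; ring⟩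
end

section
/- For all real numbers m, n > 0 and every natural number d ≥ 2, the function ε ↦ (n/(m + n))² · VarKRR(n, ε, d) is strictly antitone on (0, ∞): if 0 < ε₁ < ε₂ then (n/(m + n))² · VarKRR(n, ε₂, d) < (n/(m + n))² · VarKRR(n, ε₁, d). In other words, the expected OPMA manipulation gap attained with sufficiently many fake users, G*_O(m, n, ε) = (n/(m + n))² · VarKRR(n, ε, d), strictly decreases as the privacy budget ε increases, implying a more successful attack. -/
/-- Corollary 4.5: the expected OPMA manipulation gap attained with
sufficiently many fake users, `G*_O(m, n, ε) = (n/(m+n))² · VarKRR(n, ε, d)`,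
strictly decreases as the privacy budget `ε` increases. -/
theorem GO_star_strictAnti_in_budget {m n : ℝ} (hm : 0 < m) (hn : 0 < n)
    {d : ℕ} (hd : 2 ≤ d) {ε₁ ε₂ : ℝ} (h1 : 0 < ε₁) (h12 : ε₁ < ε₂) :
    (n / (m + n)) ^ 2 * VarKRR n ε₂ d < (n / (m + n)) ^ 2 * VarKRR n ε₁ d := by
  have hmn : (0:ℝ) < (n/(m+n))^2 := by positivity
  apply mul_lt_mul_of_pos_left _ hmn
  have h1' : 1 < Real.exp ε₁ := by
    rw [show (1:ℝ) = Real.exp 0 by simp]; exact Real.exp_lt_exp.mpr h1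
  have h12' : Real.exp ε₁ < Real.exp ε₂ := Real.exp_lt_exp.mpr h12
  set x1 := Real.exp ε₁
  set x2 := Real.exp ε₂
  have hc : (0:ℝ) ≤ (d:ℝ) - 2 := by
    have : (2:ℝ) ≤ d := by exact_mod_cast hd
    linarith
  have hdpos : (0:ℝ) < (d:ℝ) := by
    have : (2:ℝ) ≤ d := by exact_mod_cast hd
    linarith
  unfold VarKRR
  have key : ((d:ℝ) - 2 + x2) / (n * (x2 - 1) ^ 2)
      < ((d:ℝ) - 2 + x1) / (n * (x1 - 1) ^ 2) := by
    have pos : 0 < (x2 - x1) * (((d:ℝ) - 1) * (x2 + x1 - 2) + (x1 - 1) * (x2 - 1)) := by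
      apply mul_pos (by linarith)
      have : 0 < (x1 - 1) * (x2 - 1) := mul_pos (by linarith) (by linarith)
      nlinarith
    rw [div_lt_div_iff₀ (mul_pos hn (pow_pos (by linarith) 2))
      (mul_pos hn (pow_pos (by linarith) 2))]
    nlinarith [mul_pos hn pos]
  have key2 : ((d:ℝ) - 2) / (n * d * (x2 - 1)) ≤ ((d:ℝ) - 2) / (n * d * (x1 - 1)) := by
    gcongr
    all_goals first
      | exact mul_pos (mul_pos hn hdpos) (by linarith)
      | linarith
  linarith
end

section
/- Let d ≥ 2 be a natural number, let m, n > 0, ε > 0 and p > q be real numbers, and let f, f̃ : Fin d → ℝ. For every real α > 1, G_O(m, n, ε) > G_O(α·m, α·n, ε), where G_O(α·m, α·n, ε) is defined with feasible set F(α·m), bias objective (1/d) · ∑_k ((α·n·f k·(p − q) + x k − α·m·q)/(α·(m + n)·(p − q)) − f̃ k)², and variance term (α·n/(α·(m + n)))² · VarKRR(α·n, ε, d); that is, scaling both the fake and genuine user populations by α > 1 strictly decreases the expected OPMA manipulation gap. -/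
/-- The expected OPMA manipulation gap. -/
noncomputable def GO {d : ℕ} (f ftil : Fin d → ℝ) (p q m n ε : ℝ) : ℝ :=
  sInf (BO f ftil p q m n '' Feas m) + (n / (m + n)) ^ 2 * VarKRR n ε d

lemma BO_scale {d : ℕ} (f ftil : Fin d → ℝ) {p q m n α : ℝ} (hα : α ≠ 0)
    (x : Fin d → ℝ) :
    BO f ftil p q (α * m) (α * n) (fun k => α * x k) = BO f ftil p q m n x := by
  unfold BO
  congr 1
  refine Finset.sum_congr rfl fun k _ => ?_
  congr 2
  rw [show α * n * f k * (p - q) + α * x k - α * m * q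
        = α * (n * f k * (p - q) + x k - m * q) by ring,
      show (α * m + α * n) * (p - q) = α * ((m + n) * (p - q)) by ring,
      mul_div_mul_left _ _ hα]

/-- Corollary 4.6: scaling both the fake and genuine user populations by
`α > 1` strictly decreases the expected OPMA manipulation gap. -/
theorem GO_strictAnti_in_population {d : ℕ} (hd : 2 ≤ d) {m n ε p q : ℝ}
    (hm : 0 < m) (hn : 0 < n) (hε : 0 < ε) (hpq : q < p)
    (f ftil : Fin d → ℝ) {α : ℝ} (hα : 1 < α) :
    GO f ftil p q (α * m) (α * n) ε < GO f ftil p q m n ε := by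
  have hα0 : 0 < α := lt_trans one_pos hα
  have hαne : α ≠ 0 := ne_of_gt hα0
  have himg : BO f ftil p q (α * m) (α * n) '' Feas (α * m)
      = BO f ftil p q m n '' Feas m := by
    ext y
    constructor
    · rintro ⟨x, ⟨hx1, hx2⟩, rfl⟩
      refine ⟨fun k => x k / α, ⟨fun k => ⟨div_nonneg (hx1 k).1 hα0.le, ?_⟩, ?_⟩, ?_⟩
      · rw [div_le_iff₀ hα0]
        calc x k ≤ α * m := (hx1 k).2
        _ = m * α := by ring
      · rw [← Finset.sum_div, hx2]
        field_simp
      · rw [← BO_scale f ftil hαne (fun k => x k / α)]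
        congr 1
        funext k
        field_simp
    · rintro ⟨x, ⟨hx1, hx2⟩, rfl⟩
      refine ⟨fun k => α * x k, ⟨fun k => ⟨mul_nonneg hα0.le (hx1 k).1,
        mul_le_mul_of_nonneg_left (hx1 k).2 hα0.le⟩, ?_⟩, BO_scale f ftil hαne x⟩
      rw [← Finset.mul_sum, hx2]
  have hcoef : α * n / (α * m + α * n) = n / (m + n) := by
    rw [show α * m + α * n = α * (m + n) by ring, mul_div_mul_left _ _ hαne]
  have he : 1 < Real.exp ε := by
    calc (1:ℝ) = Real.exp 0 := Real.exp_zero.symm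
    _ < Real.exp ε := Real.exp_lt_exp.mpr hε
  have hd2 : (2 : ℝ) ≤ (d : ℝ) := by exact_mod_cast hd
  have hvar : VarKRR (α * n) ε d < VarKRR n ε d := by
    unfold VarKRR
    have hE1 : (0:ℝ) < Real.exp ε - 1 := by linarith
    have hE : (0 : ℝ) < (Real.exp ε - 1) ^ 2 := pow_pos hE1 2
    have hdpos : (0:ℝ) < (d:ℝ) := by linarith
    have h1 : ((d : ℝ) - 2 + Real.exp ε) / (α * n * (Real.exp ε - 1) ^ 2)
        < ((d : ℝ) - 2 + Real.exp ε) / (n * (Real.exp ε - 1) ^ 2) := by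
      apply div_lt_div_of_pos_left
      · have := Real.exp_pos ε; linarith
      · exact mul_pos hn hE
      · nlinarith [mul_pos hn hE]
    have h2 : ((d : ℝ) - 2) / (α * n * (d : ℝ) * (Real.exp ε - 1))
        ≤ ((d : ℝ) - 2) / (n * (d : ℝ) * (Real.exp ε - 1)) := by
      apply div_le_div_of_nonneg_left (by linarith) (mul_pos (mul_pos hn hdpos) hE1)
      nlinarith [mul_pos (mul_pos hn hdpos) hE1]
    linarith
  have hcoefpos : (0 : ℝ) < (n / (m + n)) ^ 2 := by positivity
  unfold GO
  rw [himg, hcoef]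
  have := mul_lt_mul_of_pos_left hvar hcoefpos
  linarith
end

section
/- Let d ≥ 1 be a natural number, let m > 0 and ν ≥ 0 be real numbers, and let f, g : Fin d → ℝ. Let k* ∈ Fin d be an index maximizing k ↦ ν · f k/(m + ν) − g k, and define y : Fin d → ℝ by y k* = m and y k = 0 for k ≠ k*. Then for every x : Fin d → ℝ with 0 ≤ x k ≤ m for all k and ∑_k x k = m, (1/d) · ∑_k ((x k + ν · f k)/(ν + m) − g k)² ≤ (1/d) · ∑_k ((y k + ν · f k)/(ν + m) − g k)²; that is, the dissimilarity objective is maximized over the feasible set by assigning all m fake users to the item k*. -/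
/-- Theorem 4.3 (IDMA): the dissimilarity objective is maximized over the
feasible set by assigning all `m` fake users to the item `k*` maximizing
`k ↦ ν · f k / (m + ν) − g k`. -/
theorem idma_maximizer {d : ℕ} (hd : 1 ≤ d) {m ν : ℝ} (hm : 0 < m) (hν : 0 ≤ ν)
    (f g : Fin d → ℝ) (kstar : Fin d)
    (hks : ∀ k, ν * f k / (m + ν) - g k ≤ ν * f kstar / (m + ν) - g kstar)
    (x : Fin d → ℝ) (hx : ∀ k, 0 ≤ x k ∧ x k ≤ m) (hsum : ∑ k, x k = m) :
    (1 / (d : ℝ)) * ∑ k, ((x k + ν * f k) / (ν + m) - g k) ^ 2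
      ≤ (1 / (d : ℝ)) *
          ∑ k, (((if k = kstar then m else 0) + ν * f k) / (ν + m) - g k) ^ 2 := by
  have hνm : 0 < ν + m := by linarith
  apply mul_le_mul_of_nonneg_left _ (by positivity)
  set c : Fin d → ℝ := fun k => ν * f k / (m + ν) - g k with hc
  have expand : ∀ z : Fin d → ℝ, ∀ k,
      ((z k + ν * f k) / (ν + m) - g k) ^ 2
        = (z k / (ν + m)) ^ 2 + 2 * (z k / (ν + m)) * c k + (c k) ^ 2 := by
    intro z k
    have : (z k + ν * f k) / (ν + m) - g k = z k / (ν + m) + c k := by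
      simp only [hc]
      field_simp
      ring
    rw [this]; ring
  have e1 := expand x
  have e2 := expand (fun k => if k = kstar then m else 0)
  simp only [e1, e2]
  rw [Finset.sum_add_distrib, Finset.sum_add_distrib,
      Finset.sum_add_distrib, Finset.sum_add_distrib]
  have h1 : ∑ k, ((if k = kstar then m else (0:ℝ)) / (ν + m)) ^ 2 = (m / (ν + m)) ^ 2 := by
    simp [apply_ite (fun t : ℝ => (t / (ν + m)) ^ 2)]
  have h2 : ∑ k, 2 * ((if k = kstar then m else (0:ℝ)) / (ν + m)) * c k
      = 2 * (m / (ν + m)) * c kstar := by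
    simp [apply_ite (fun t : ℝ => t / (ν + m)), mul_ite, ite_mul]
  rw [h1, h2]
  have hA : ∑ k, (x k / (ν + m)) ^ 2 ≤ (m / (ν + m)) ^ 2 := by
    have : ∑ k, (x k / (ν + m)) ^ 2 ≤ ∑ k, (m / (ν + m)) * (x k / (ν + m)) := by
      apply Finset.sum_le_sum
      intro k _
      have h0 := (hx k).1
      have h1 := (hx k).2
      rw [sq]
      apply mul_le_mul_of_nonneg_right _ (by positivity)
      gcongr
    calc ∑ k, (x k / (ν + m)) ^ 2 ≤ ∑ k, (m / (ν + m)) * (x k / (ν + m)) := this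
      _ = (m / (ν + m)) * ((∑ k, x k) / (ν + m)) := by
          rw [Finset.sum_div, Finset.mul_sum]
      _ = (m / (ν + m)) ^ 2 := by rw [hsum, sq]
  have hB : ∑ k, 2 * (x k / (ν + m)) * c k ≤ 2 * (m / (ν + m)) * c kstar := by
    have : ∑ k, 2 * (x k / (ν + m)) * c k ≤ ∑ k, 2 * (x k / (ν + m)) * c kstar := by
      apply Finset.sum_le_sum
      intro k _
      apply mul_le_mul_of_nonneg_left (hks k)
      have := (hx k).1
      positivity
    calc ∑ k, 2 * (x k / (ν + m)) * c k ≤ ∑ k, 2 * (x k / (ν + m)) * c kstar := this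
      _ = 2 * ((∑ k, x k) / (ν + m)) * c kstar := by
          rw [Finset.sum_div, Finset.mul_sum, Finset.sum_mul]
      _ = 2 * (m / (ν + m)) * c kstar := by rw [hsum]
  linarith
end
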